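/- If p is a prime with p ≡ 5 (mod 8) or p ≡ 7 (mod 8), then p divides P_{(p-1)/2}, where P_n are the Catalan-Larcombe-French numbers. -/

import Mathlib

/-!
Over `ℚ` the recurrence is solved by `P n = ∑ₖ T(n, k)`, `T(n, k) = C(n, 2k) C(2k, k)² 8ⁿ / 16ᵏ`,
as checked termwise with the creative-telescoping certificate `8 k³ T(n, k)`; hence
`2ⁿ P n = ∑ₖ C(n, 2k) C(2k, k)² 16ⁿ⁻ᵏ ∈ ℤ`.

Modulo `p = 2m + 1` one has `C(p - 1, j) ≡ (-1)ʲ` and `C(2k, k) ≡ (-4)ᵏ C(m, k)`, so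
`P (p - 1) ≡ ∑ₖ C(m, k)² = C(2m, m) ≡ (-1)ᵐ`. Since `n ↦ -n` maps the recurrence at index `n` to the
one at `p - n` up to powers of `128`, the sequence `128ⁿ P (p - 1 - n)` solves it too, with
initial values `P (p - 1) • (P 0, P 1)`; thus `128ᵐ P m ≡ (-1)ᵐ P m`. For `p ≡ 5, 7 (mod 8)`,
Euler's criterion gives `(-2)ᵐ ≡ -1`, so `(-128)ᵐ = ((-2)ᵐ)⁷ ≡ -1` and `2 P m ≡ 0`.
-/

open Finset

/-- The bound `N` matters in characteristic `p`, where the leading coefficient vanishes at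
`n + 2 = p`. -/
def IsCLFRec {R : Type*} [CommRing R] (Q : ℕ → R) (N : ℕ) : Prop :=
  ∀ n, n + 2 ≤ N → ((n : R) + 2) ^ 2 * Q (n + 2) =
    8 * (3 * ((n : R) + 2) ^ 2 - 3 * ((n : R) + 2) + 1) * Q (n + 1)
      - 128 * ((n : R) + 1) ^ 2 * Q n

section Recurrence

variable {R : Type*} [CommRing R] {Q : ℕ → R} {N : ℕ}

theorem isCLFRec_intCast {P : ℕ → ℤ}
    (hrec : ∀ n : ℕ, 2 ≤ n →
      (n : ℤ) ^ 2 * P n =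
        8 * (3 * (n : ℤ) ^ 2 - 3 * (n : ℤ) + 1) * P (n - 1)
          - 128 * ((n : ℤ) - 1) ^ 2 * P (n - 2)) (N : ℕ) :
    IsCLFRec (fun n ↦ (P n : R)) N := by
  intro n _
  have h := congrArg (Int.cast : ℤ → R) (hrec (n + 2) (by omega))
  push_cast at h
  linear_combination h

theorem IsCLFRec.mono {M : ℕ} (hQ : IsCLFRec Q N) (hMN : M ≤ N) : IsCLFRec Q M :=
  fun n hn ↦ hQ n (hn.trans hMN)

theorem IsCLFRec.reflect (hQ : IsCLFRec Q N) (hN : (N : R) + 1 = 0) :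
    IsCLFRec (fun n ↦ 128 ^ n * Q (N - n)) N := by
  intro n hn
  obtain ⟨j, rfl⟩ : ∃ j, N = j + n + 2 := ⟨N - n - 2, by omega⟩
  have hj : (j : R) = -n - 3 := by push_cast at hN; linear_combination hN
  have hQj := hQ j (by omega)
  rw [hj] at hQj
  simp only [show j + n + 2 - (n + 2) = j by omega, show j + n + 2 - (n + 1) = j + 1 by omega,
    show j + n + 2 - n = j + 2 by omega]
  linear_combination (128 ^ (n + 1) : R) * hQj

theorem IsCLFRec.eq_const_mul {K : Type*} [Field K] {Q Q' : ℕ → K} {N : ℕ}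
    (hQ : IsCLFRec Q N) (hQ' : IsCLFRec Q' N) (hN : ∀ n, n + 2 ≤ N → (n : K) + 2 ≠ 0) (c : K)
    (h0 : Q' 0 = c * Q 0) (h1 : Q' 1 = c * Q 1) : ∀ n ≤ N, Q' n = c * Q n := by
  intro n
  induction n using Nat.twoStepInduction with
  | zero => exact fun _ ↦ h0
  | one => exact fun _ ↦ h1
  | more n ih ih' =>
    intro hn
    apply mul_left_cancel₀ (pow_ne_zero 2 (hN n hn))
    rw [hQ' n hn, ih (by omega), ih' (by omega)]
    linear_combination -c * hQ n hn

end Recurrence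

section Choose

variable (R : Type*) [CommRing R]

theorem Nat.cast_choose_mul_succ (n k : ℕ) :
    (n.choose k : R) * (n + 1) = (n + 1).choose k * (n + 1 - k) := by
  rcases le_or_gt k (n + 1) with hk | hk
  · have h := congrArg (Nat.cast : ℕ → R) (Nat.choose_mul_succ_eq n k)
    push_cast [Nat.cast_sub hk] at h
    exact h
  · simp [Nat.choose_eq_zero_of_lt hk, Nat.choose_eq_zero_of_lt (Nat.lt_of_succ_lt hk)]

theorem Nat.cast_choose_succ_right_mul (n k : ℕ) :
    (n.choose (k + 1) : R) * (k + 1) = n.choose k * (n - k) := by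
  rcases le_or_gt k n with hk | hk
  · have h := congrArg (Nat.cast : ℕ → R) (Nat.choose_succ_right_eq n k)
    push_cast [Nat.cast_sub hk] at h
    exact h
  · simp [Nat.choose_eq_zero_of_lt hk, Nat.choose_eq_zero_of_lt (Nat.lt_succ_of_lt hk)]

end Choose

noncomputable def clfTerm (n k : ℕ) : ℚ :=
  n.choose (2 * k) * Nat.centralBinom k ^ 2 * 8 ^ n / 16 ^ k

noncomputable def clf (n : ℕ) : ℚ := ∑ k ∈ range (n + 1), clfTerm n k

theorem clfTerm_eq_zero {n k : ℕ} (h : n < 2 * k) : clfTerm n k = 0 := by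
  simp [clfTerm, Nat.choose_eq_zero_of_lt h]

theorem clfTerm_succ_left (n k : ℕ) :
    8 * ((n : ℚ) + 1) * clfTerm n k = ((n : ℚ) + 1 - 2 * k) * clfTerm (n + 1) k := by
  have h := Nat.cast_choose_mul_succ ℚ n (2 * k)
  push_cast at h
  unfold clfTerm
  linear_combination (8 * Nat.centralBinom k ^ 2 * 8 ^ n / 16 ^ k : ℚ) * h

theorem clfTerm_succ_right (n k : ℕ) :
    8 * ((k : ℚ) + 1) ^ 3 * clfTerm n (k + 1) =
      ((n : ℚ) - 2 * k) * (n - 2 * k - 1) * (2 * k + 1) * clfTerm n k := by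
  have h₂ := Nat.cast_choose_succ_right_mul ℚ n (2 * k + 1)
  have h₁ := Nat.cast_choose_succ_right_mul ℚ n (2 * k)
  have hc := congrArg (Nat.cast : ℕ → ℚ) (Nat.succ_mul_centralBinom_succ k)
  push_cast at h₁ h₂ hc
  unfold clfTerm
  linear_combination ((k + 1) * n.choose (2 * (k + 1)) * (8 ^ n / 16 ^ k) / 2 *
      ((k + 1) * Nat.centralBinom (k + 1) + 2 * (2 * k + 1) * Nat.centralBinom k)) * hc
    + ((2 * k + 1) ^ 2 * Nat.centralBinom k ^ 2 * (8 ^ n / 16 ^ k)) * h₂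
    + ((2 * k + 1) * Nat.centralBinom k ^ 2 * (8 ^ n / 16 ^ k) * (n - 2 * k - 1)) * h₁

theorem clfTerm_telescoping (n k : ℕ) :
    ((n : ℚ) + 2) ^ 3 * clfTerm (n + 2) k + 128 * ((n : ℚ) + 2) * ((n : ℚ) + 1) ^ 2 * clfTerm n k
      + (8 * ((k : ℚ) + 1) ^ 3 * clfTerm (n + 2) (k + 1) - 8 * (k : ℚ) ^ 3 * clfTerm (n + 2) k) =
    8 * ((n : ℚ) + 2) * (3 * ((n : ℚ) + 2) ^ 2 - 3 * ((n : ℚ) + 2) + 1) * clfTerm (n + 1) k := by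
  have h₀ := clfTerm_succ_left n k
  have h₁ := clfTerm_succ_left (n + 1) k
  have h₂ := clfTerm_succ_right (n + 2) k
  push_cast at h₀ h₁ h₂
  linear_combination (16 * ((n : ℚ) + 2) * (n + 1)) * h₀
    + (2 * ((n : ℚ) + 1) * (n + 1 - 2 * k) - (3 * ((n : ℚ) + 2) ^ 2 - 3 * ((n : ℚ) + 2) + 1)) * h₁
    + h₂

theorem sum_range_clfTerm {n K : ℕ} (hK : n + 1 ≤ K) : ∑ k ∈ range K, clfTerm n k = clf n :=
  eventually_constant_sum (fun _ hk ↦ clfTerm_eq_zero (by omega)) hK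

theorem isCLFRec_clf (N : ℕ) : IsCLFRec clf N := by
  intro n _
  have hsum := sum_congr rfl fun k (_ : k ∈ range (n + 3)) ↦ clfTerm_telescoping n k
  have htel := sum_range_sub (fun k ↦ 8 * (k : ℚ) ^ 3 * clfTerm (n + 2) k) (n + 3)
  push_cast at htel
  rw [clfTerm_eq_zero (by omega : n + 2 < 2 * (n + 3))] at htel
  simp only [sum_add_distrib, ← mul_sum, htel, sum_range_clfTerm (by omega : n + 1 ≤ n + 3),
    sum_range_clfTerm (by omega : n + 1 + 1 ≤ n + 3),
    sum_range_clfTerm (by omega : n + 2 + 1 ≤ n + 3)] at hsum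
  apply mul_left_cancel₀ (by positivity : (n : ℚ) + 2 ≠ 0)
  linear_combination hsum

theorem eq_clf {Q : ℕ → ℚ} (hQ : ∀ N, IsCLFRec Q N) (h0 : Q 0 = 1) (h1 : Q 1 = 8) (n : ℕ) :
    Q n = clf n := by
  have := (isCLFRec_clf n).eq_const_mul (hQ n) (fun _ _ ↦ by positivity) 1
    (by simp [h0, clf, clfTerm]) (by simp [h1, clf, clfTerm, sum_range_succ]) n le_rfl
  rwa [one_mul] at this

theorem two_pow_mul_eq_sum {P : ℕ → ℤ} (hP : ∀ N, IsCLFRec (fun n ↦ (P n : ℚ)) N)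
    (h0 : P 0 = 1) (h1 : P 1 = 8) (n : ℕ) :
    2 ^ n * P n =
      ∑ k ∈ range (n + 1), (n.choose (2 * k) * Nat.centralBinom k ^ 2 * 16 ^ (n - k) : ℤ) := by
  qify
  rw [eq_clf hP (by simp [h0]) (by simp [h1]), clf, mul_sum]
  refine sum_congr rfl fun k hk ↦ ?_
  rw [clfTerm, pow_sub₀ _ (by norm_num) (by simp at hk; omega),
    show (16 : ℚ) ^ n = 2 ^ n * 8 ^ n by rw [← mul_pow]; norm_num]
  ring

theorem ZMod.natCast_ne_zero_of_lt {n k : ℕ} (h0 : k ≠ 0) (hk : k < n) : (k : ZMod n) ≠ 0 := by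
  rw [Ne, ZMod.natCast_eq_zero_iff]
  exact Nat.not_dvd_of_pos_of_lt (Nat.pos_of_ne_zero h0) hk

section ZModPrime

variable {p : ℕ} [Fact p.Prime]

theorem ZMod.cast_choose_pred {k : ℕ} (hk : k < p) : ((p - 1).choose k : ZMod p) = (-1) ^ k := by
  induction k with
  | zero => simp
  | succ k ih =>
    have hpascal := congrArg (Nat.cast : ℕ → ZMod p) (Nat.choose_succ_succ' (p - 1) k)
    rw [Nat.sub_add_cancel (Fact.out : p.Prime).one_le, (ZMod.natCast_eq_zero_iff _ p).2
      ((Fact.out : p.Prime).dvd_choose_self k.succ_ne_zero hk)] at hpascal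
    push_cast at hpascal
    rw [ih (by omega)] at hpascal
    linear_combination -hpascal

theorem ZMod.cast_centralBinom {m k : ℕ} (hp : p = 2 * m + 1) (hk : k ≤ m) :
    (Nat.centralBinom k : ZMod p) = (-4) ^ k * m.choose k := by
  induction k with
  | zero => simp
  | succ k ih =>
    have hc := congrArg (Nat.cast : ℕ → ZMod p) (Nat.succ_mul_centralBinom_succ k)
    have hm := Nat.cast_choose_succ_right_mul (ZMod p) m k
    have hp0 : ((2 * m + 1 : ℕ) : ZMod p) = 0 := by rw [← hp, ZMod.natCast_self]
    have hk0 : (k : ZMod p) + 1 ≠ 0 := by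
      exact_mod_cast ZMod.natCast_ne_zero_of_lt k.succ_ne_zero (by omega : k + 1 < p)
    push_cast at hc hp0
    apply mul_left_cancel₀ hk0
    rw [hc, ih (by omega)]
    linear_combination -(-4) ^ (k + 1) * hm + 2 * (-4) ^ k * m.choose k * hp0

theorem ZMod.cast_sum_choose_mul_centralBinom_sq {m : ℕ} (hp : p = 2 * m + 1) :
    ((∑ k ∈ range (2 * m + 1),
      ((2 * m).choose (2 * k) * Nat.centralBinom k ^ 2 * 16 ^ (2 * m - k) : ℤ) : ℤ) : ZMod p) =
      (-1) ^ m := by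
  have hp1 : 2 * m = p - 1 := by omega
  have h16 : (16 : ZMod p) ^ (2 * m) = 1 := by
    rw [hp1, show (16 : ZMod p) = 2 ^ 4 by norm_num]
    exact ZMod.pow_card_sub_one_eq_one
      (pow_ne_zero 4 (Ring.two_ne_zero (by rw [ZMod.ringChar_zmod_n]; omega)))
  have hterm : ∀ k ∈ range (m + 1), ((2 * m).choose (2 * k) : ZMod p) *
      (Nat.centralBinom k : ZMod p) ^ 2 * 16 ^ (2 * m - k) = ((m.choose k ^ 2 : ℕ) : ZMod p) := by
    intro k hk
    have hk : k ≤ m := Nat.lt_succ_iff.1 (mem_range.1 hk)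
    rw [hp1, ZMod.cast_choose_pred (by omega), ZMod.cast_centralBinom hp hk, ← hp1,
      (even_two_mul k).neg_one_pow, mul_pow, ← pow_mul, mul_comm k 2, pow_mul]
    norm_num
    rw [mul_right_comm, ← pow_add, Nat.add_sub_cancel' (by omega), h16, one_mul]
  push_cast
  rw [eventually_constant_sum (N := m + 1) (fun k hk ↦ by
      simp [Nat.choose_eq_zero_of_lt (by omega : 2 * m < 2 * k)]) (by omega),
    sum_congr rfl hterm, ← Nat.cast_sum, Nat.sum_range_choose_sq, hp1,
    ZMod.cast_choose_pred (by omega)]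

theorem cast_pred_eq_neg_one_pow {P : ℕ → ℤ} (hP : ∀ N, IsCLFRec (fun n ↦ (P n : ℚ)) N)
    (h0 : P 0 = 1) (h1 : P 1 = 8) {m : ℕ} (hp : p = 2 * m + 1) :
    (P (2 * m) : ZMod p) = (-1) ^ m := by
  have h := congrArg (Int.cast : ℤ → ZMod p) (two_pow_mul_eq_sum hP h0 h1 (2 * m))
  rw [ZMod.cast_sum_choose_mul_centralBinom_sq hp, Int.cast_mul, Int.cast_pow, Int.cast_ofNat,
    show 2 * m = p - 1 by omega,
    ZMod.pow_card_sub_one_eq_one (Ring.two_ne_zero (by rw [ZMod.ringChar_zmod_n]; omega)),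
    one_mul] at h
  rwa [show 2 * m = p - 1 by omega]

theorem IsCLFRec.pow_mul_reflect_eq {Q : ℕ → ZMod p} (hQ : IsCLFRec Q p) (h0 : Q 0 = 1)
    (h1 : Q 1 = 8) {n : ℕ} (hn : n ≤ p - 1) : 128 ^ n * Q (p - 1 - n) = Q (p - 1) * Q n := by
  have hp2 := (Fact.out : p.Prime).two_le
  have hN : ((p - 1 : ℕ) : ZMod p) + 1 = 0 := by
    rw [← Nat.cast_add_one, Nat.sub_add_cancel (by omega), ZMod.natCast_self]
  have hlast : 128 * Q (p - 2) = 8 * Q (p - 1) := by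
    have h := hQ (p - 2) (by omega)
    rw [Nat.cast_sub hp2, ZMod.natCast_self, show p - 2 + 2 = p by omega,
      show p - 2 + 1 = p - 1 by omega] at h
    linear_combination h
  have hQ' := hQ.mono (Nat.sub_le p 1)
  refine hQ'.eq_const_mul (hQ'.reflect hN)
    (fun k hk ↦ by exact_mod_cast ZMod.natCast_ne_zero_of_lt (by omega) (by omega : k + 2 < p))
    (Q (p - 1)) (by simp [h0]) ?_ n hn
  rw [pow_one, show p - 1 - 1 = p - 2 by omega, hlast, h1, mul_comm]

theorem ZMod.neg_two_pow_div_two (h8 : p % 8 = 5 ∨ p % 8 = 7) : (-2 : ZMod p) ^ (p / 2) = -1 := by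
  have h := legendreSym.eq_pow p (-2)
  rw [legendreSym.at_neg_two (by omega), ZMod.χ₈'_nat_eq_if_mod_eight, if_neg (by omega),
    if_neg (by omega)] at h
  push_cast at h
  exact h.symm

end ZModPrime

/-- If `p` is a prime with `p ≡ 5` or `7 (mod 8)`, then `p ∣ P ((p-1)/2)` for the
Catalan-Larcombe-French numbers. -/
theorem clf_central_dvd (p : ℕ) (hp : p.Prime) (h8 : p % 8 = 5 ∨ p % 8 = 7)
    (P : ℕ → ℤ) (h0 : P 0 = 1) (h1 : P 1 = 8)
    (hrec : ∀ n : ℕ, 2 ≤ n →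
      (n : ℤ) ^ 2 * P n =
        8 * (3 * (n : ℤ) ^ 2 - 3 * (n : ℤ) + 1) * P (n - 1)
          - 128 * ((n : ℤ) - 1) ^ 2 * P (n - 2)) :
    (p : ℤ) ∣ P ((p - 1) / 2) := by
  have := Fact.mk hp
  obtain ⟨m, hpm⟩ : ∃ m, p = 2 * m + 1 := ⟨p / 2, by omega⟩
  have hcentre := (isCLFRec_intCast (R := ZMod p) hrec p).pow_mul_reflect_eq (by simp [h0])
    (by simp [h1]) (n := m) (by omega)
  rw [show p - 1 - m = m by omega, show p - 1 = 2 * m by omega,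
    cast_pred_eq_neg_one_pow (isCLFRec_intCast hrec) h0 h1 hpm] at hcentre
  have h128 : (128 : ZMod p) ^ m * (-1) ^ m = -1 := by
    rw [← mul_pow, show (128 * -1 : ZMod p) = (-2) ^ 7 by norm_num, ← pow_mul, mul_comm, pow_mul,
      show m = p / 2 by omega, ZMod.neg_two_pow_div_two h8]
    norm_num
  rw [show (p - 1) / 2 = m by omega, ← ZMod.intCast_zmod_eq_zero_iff_dvd]
  refine (mul_eq_zero.1 ?_).resolve_left (Ring.two_ne_zero (by rw [ZMod.ringChar_zmod_n]; omega))
  have hsq : ((-1 : ZMod p) ^ m) ^ 2 = 1 := by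
    rw [← pow_mul, mul_comm, pow_mul, neg_one_sq, one_pow]
  linear_combination (P m : ZMod p) * h128 - (-1) ^ m * hcentre - (P m : ZMod p) * hsq
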